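/- Let g₁, g₂ be symmetric positive definite N×N matrices with |g₁|, |g₂|, |g₁^{-1}|, |g₂^{-1}| ≤ K, and let n⁽¹⁾, n⁽²⁾ be unit vectors. Writing n_{gᵢ}⁽ʲ⁾ = (n⁽ʲ⁾ᵀ gᵢ^{-1} n⁽ʲ⁾)^{-1/2} gᵢ^{-1} n⁽ʲ⁾, one has | g₁(n_{g₁}⁽¹⁾, n_{g₁}⁽²⁾) − g₂(n_{g₂}⁽¹⁾, n_{g₂}⁽²⁾) | ≤ c |g₁ − g₂| for a constant c depending only on K and N, where g(v,w) = vᵀ g w. -/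

import Mathlib

/-!
Both sides are cosines: `g(n_g⁽¹⁾, n_g⁽²⁾) = n⁽¹⁾ᵀg⁻¹n⁽²⁾ / √(n⁽¹⁾ᵀg⁻¹n⁽¹⁾ · n⁽²⁾ᵀg⁻¹n⁽²⁾)` is the
cosine of the angle between `n⁽¹⁾` and `n⁽²⁾` for the inner product `g⁻¹`. On unit vectors the
entries of `g⁻¹` are bounded by `|g⁻¹| ≤ K`, the diagonal ones are at least `1/K` (Cauchy–Schwarz
for `g⁻¹` applied to `n` and `g n`), and `g₁⁻¹ - g₂⁻¹ = g₁⁻¹ (g₂ - g₁) g₂⁻¹` has norm at most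
`K² |g₁ - g₂|`. On the region where the diagonal entries are at least `1/K`, the cosine is a
Lipschitz function of the three entries, which gives the constant `K³ + K⁷`.
-/

open Matrix

noncomputable section

/-- Euclidean norm of a vector in `ℝ^N`. -/
def vnorm {N : ℕ} (v : Fin N → ℝ) : ℝ := Real.sqrt (∑ i, (v i) ^ 2)

/-- Frobenius norm of an `N × N` matrix. -/
def frob {N : ℕ} (M : Matrix (Fin N) (Fin N) ℝ) : ℝ := Real.sqrt (∑ i, ∑ j, (M i j) ^ 2)

/-- The `g`-unit normal `n_g = (nᵀ g⁻¹ n)^{-1/2} g⁻¹ n`. -/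
def gnormal {N : ℕ} (g : Matrix (Fin N) (Fin N) ℝ) (n : Fin N → ℝ) : Fin N → ℝ :=
  (Real.sqrt (n ⬝ᵥ g⁻¹ *ᵥ n))⁻¹ • (g⁻¹ *ᵥ n)

/-- The bilinear form of a matrix: `g(v,w) = vᵀ g w`. -/
def bilin {N : ℕ} (g : Matrix (Fin N) (Fin N) ℝ) (v w : Fin N → ℝ) : ℝ :=
  v ⬝ᵥ g *ᵥ w

section Frobenius

attribute [local instance] Matrix.frobeniusNormedAddCommGroup

lemma frob_eq_norm {N : ℕ} (M : Matrix (Fin N) (Fin N) ℝ) : frob M = ‖M‖ := by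
  rw [frob, frobenius_norm_def, Real.sqrt_eq_rpow]
  simp

lemma vnorm_eq_norm {N : ℕ} (v : Fin N → ℝ) : vnorm v = ‖WithLp.toLp 2 v‖ := by
  rw [vnorm, EuclideanSpace.norm_eq]
  simp

lemma frob_nonneg {N : ℕ} (M : Matrix (Fin N) (Fin N) ℝ) : 0 ≤ frob M :=
  Real.sqrt_nonneg _

lemma frob_sub_comm {N : ℕ} (A B : Matrix (Fin N) (Fin N) ℝ) : frob (A - B) = frob (B - A) := by
  simp only [frob_eq_norm, norm_sub_rev]

lemma frob_mul_le {N : ℕ} (A B : Matrix (Fin N) (Fin N) ℝ) : frob (A * B) ≤ frob A * frob B := by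
  simpa only [frob_eq_norm] using frobenius_norm_mul A B

lemma abs_dotProduct_mulVec_le {N : ℕ} (x : Fin N → ℝ) (M : Matrix (Fin N) (Fin N) ℝ)
    (y : Fin N → ℝ) : |x ⬝ᵥ M *ᵥ y| ≤ vnorm x * frob M * vnorm y := by
  let R := replicateRow Unit x * M * replicateCol Unit y
  have hR : x ⬝ᵥ M *ᵥ y = R () () := by
    rw [show R = _ from Matrix.mul_assoc _ _ _, Matrix.mul_apply]
    simp [dotProduct, mulVec, Matrix.mul_apply]
  have hnorm : ‖R‖ = |R () ()| := by
    rw [frobenius_norm_def, ← Real.sqrt_eq_rpow]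
    simp [Real.sqrt_sq_eq_abs]
  calc |x ⬝ᵥ M *ᵥ y| = ‖R‖ := by rw [hR, hnorm]
    _ ≤ ‖replicateRow Unit x‖ * ‖M‖ * ‖replicateCol Unit y‖ :=
      (frobenius_norm_mul _ _).trans (by gcongr; exact frobenius_norm_mul _ _)
    _ = vnorm x * frob M * vnorm y := by
      rw [frobenius_norm_replicateRow, frobenius_norm_replicateCol, vnorm_eq_norm,
        vnorm_eq_norm, frob_eq_norm]

end Frobenius

lemma dotProduct_self_eq_vnorm_sq {N : ℕ} (v : Fin N → ℝ) : v ⬝ᵥ v = vnorm v ^ 2 := by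
  rw [vnorm, Real.sq_sqrt (by positivity)]
  simp [dotProduct, sq]

section QuadraticForms

variable {n : Type*} [Fintype n]

lemma Matrix.IsSymm.dotProduct_mulVec_comm {R : Type*} [CommSemiring R] {A : Matrix n n R}
    (hA : A.IsSymm) (x y : n → R) : x ⬝ᵥ A *ᵥ y = y ⬝ᵥ A *ᵥ x := by
  rw [dotProduct_mulVec, dotProduct_comm, ← mulVec_transpose, hA.eq]

lemma Matrix.PosSemidef.sq_dotProduct_mulVec_le {A : Matrix n n ℝ} (hA : A.PosSemidef)
    (x y : n → ℝ) : (x ⬝ᵥ A *ᵥ y) ^ 2 ≤ (x ⬝ᵥ A *ᵥ x) * (y ⬝ᵥ A *ᵥ y) := by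
  let _ := A.toSeminormedAddCommGroup hA
  let _ := A.toInnerProductSpace hA
  have hinner (u v : n → ℝ) : (inner ℝ u v : ℝ) = u ⬝ᵥ A *ᵥ v := by
    change (A *ᵥ v) ⬝ᵥ star u = _
    rw [dotProduct_comm]
    rfl
  have := real_inner_mul_inner_self_le x y
  rw [hinner, hinner, hinner] at this
  simpa only [sq] using this

end QuadraticForms

def cosAngle {N : ℕ} (A : Matrix (Fin N) (Fin N) ℝ) (x y : Fin N → ℝ) : ℝ :=
  (x ⬝ᵥ A *ᵥ y) / (Real.sqrt (x ⬝ᵥ A *ᵥ x) * Real.sqrt (y ⬝ᵥ A *ᵥ y))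

lemma bilin_gnormal_gnormal {N : ℕ} {g : Matrix (Fin N) (Fin N) ℝ} (hs : g.IsSymm)
    (hg : IsUnit g.det) (n₁ n₂ : Fin N → ℝ) :
    bilin g (gnormal g n₁) (gnormal g n₂) = cosAngle g⁻¹ n₁ n₂ := by
  have hleft : (g⁻¹ *ᵥ n₁) ⬝ᵥ g *ᵥ (g⁻¹ *ᵥ n₂) = n₁ ⬝ᵥ g⁻¹ *ᵥ n₂ := by
    rw [mulVec_mulVec, mul_nonsing_inv g hg, one_mulVec, dotProduct_comm,
      hs.inv.dotProduct_mulVec_comm]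
  simp only [bilin, gnormal, cosAngle, mulVec_smul, dotProduct_smul, smul_dotProduct, hleft,
    smul_eq_mul]
  rw [div_eq_mul_inv, mul_inv]
  ring

lemma frob_inv_sub_inv_le {N : ℕ} {g₁ g₂ : Matrix (Fin N) (Fin N) ℝ} (h₁ : IsUnit g₁.det)
    (h₂ : IsUnit g₂.det) : frob (g₁⁻¹ - g₂⁻¹) ≤ frob g₁⁻¹ * frob g₂⁻¹ * frob (g₁ - g₂) := by
  have hinv : g₁⁻¹ - g₂⁻¹ = g₁⁻¹ * (g₂ - g₁) * g₂⁻¹ := by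
    simpa only [← nonsing_inv_eq_ringInverse] using Ring.inverse_sub_inverse
      (iff_of_true ((isUnit_iff_isUnit_det g₁).mpr h₁) ((isUnit_iff_isUnit_det g₂).mpr h₂))
  calc frob (g₁⁻¹ - g₂⁻¹) ≤ frob g₁⁻¹ * frob (g₂ - g₁) * frob g₂⁻¹ := by
        rw [hinv]
        exact (frob_mul_le _ _).trans (by gcongr; exacts [frob_nonneg _, frob_mul_le _ _])
    _ = frob g₁⁻¹ * frob g₂⁻¹ * frob (g₁ - g₂) := by rw [frob_sub_comm]; ring

lemma vnorm_sq_le_frob_mul_dotProduct_inv_mulVec {N : ℕ} {g : Matrix (Fin N) (Fin N) ℝ}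
    (hg : g.PosDef) (v : Fin N → ℝ) : vnorm v ^ 2 ≤ frob g * (v ⬝ᵥ g⁻¹ *ᵥ v) := by
  have hdet : IsUnit g.det := (isUnit_iff_isUnit_det g).mp hg.isUnit
  have hcs := hg.inv.posSemidef.sq_dotProduct_mulVec_le v (g *ᵥ v)
  rw [mulVec_mulVec, nonsing_inv_mul g hdet, one_mulVec, dotProduct_self_eq_vnorm_sq,
    dotProduct_comm (g *ᵥ v)] at hcs
  have hq : 0 ≤ v ⬝ᵥ g⁻¹ *ᵥ v := by
    simpa using hg.inv.posSemidef.dotProduct_mulVec_nonneg v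
  have hgv : v ⬝ᵥ g *ᵥ v ≤ frob g * vnorm v ^ 2 := by
    have := (le_abs_self _).trans (abs_dotProduct_mulVec_le v g v)
    linarith
  have h : (vnorm v ^ 2) ^ 2 ≤ frob g * (v ⬝ᵥ g⁻¹ *ᵥ v) * vnorm v ^ 2 := by
    nlinarith [mul_le_mul_of_nonneg_left hgv hq]
  nlinarith [mul_nonneg (frob_nonneg g) hq, sq_nonneg (vnorm v)]

lemma one_div_le_dotProduct_inv_mulVec {N : ℕ} {K : ℝ} (hK : 0 < K)
    {g : Matrix (Fin N) (Fin N) ℝ} (hg : g.PosDef) (hf : frob g ≤ K) (v : Fin N → ℝ)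
    (hv : vnorm v = 1) : 1 / K ≤ v ⬝ᵥ g⁻¹ *ᵥ v := by
  have h := vnorm_sq_le_frob_mul_dotProduct_inv_mulVec hg v
  have hq : 0 ≤ v ⬝ᵥ g⁻¹ *ᵥ v := by
    simpa using hg.inv.posSemidef.dotProduct_mulVec_nonneg v
  rw [hv, one_pow] at h
  rw [div_le_iff₀ hK]
  nlinarith [mul_le_mul_of_nonneg_right hf hq]

lemma abs_sqrt_sub_sqrt_le {m p q : ℝ} (hm : 0 < m) (hp : m ^ 2 ≤ p) (hq : m ^ 2 ≤ q) :
    |√p - √q| ≤ |p - q| / (2 * m) := by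
  have hsp : m ≤ √p := Real.le_sqrt_of_sq_le hp
  have hsq : m ≤ √q := Real.le_sqrt_of_sq_le hq
  have hdiff : (√p - √q) * (√p + √q) = p - q := by
    linear_combination Real.sq_sqrt ((sq_nonneg m).trans hp) - Real.sq_sqrt ((sq_nonneg m).trans hq)
  rw [le_div_iff₀ (by positivity), ← hdiff, abs_mul, abs_of_pos (by linarith : 0 < √p + √q)]
  gcongr
  linarith

lemma abs_div_sqrt_sub_div_sqrt_le {m a b p q : ℝ} (hm : 0 < m) (hp : m ^ 2 ≤ p)
    (hq : m ^ 2 ≤ q) :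
    |a / √p - b / √q| ≤ |a - b| / m + |b| * |p - q| / (2 * m ^ 3) := by
  have hsp : m ≤ √p := Real.le_sqrt_of_sq_le hp
  have hsq : m ≤ √q := Real.le_sqrt_of_sq_le hq
  have hsp₀ : 0 < √p := hm.trans_le hsp
  have hsq₀ : 0 < √q := hm.trans_le hsq
  have hsplit : a / √p - b / √q = (a - b) / √p + b * (√q - √p) / (√p * √q) := by
    field_simp
    ring
  calc |a / √p - b / √q| ≤ |(a - b) / √p| + |b * (√q - √p) / (√p * √q)| := by
        rw [hsplit]
        exact abs_add_le _ _
    _ ≤ |a - b| / m + |b| * (|p - q| / (2 * m)) / (m * m) := by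
        rw [abs_div, abs_div, abs_mul, abs_of_pos hsp₀, abs_of_pos (mul_pos hsp₀ hsq₀),
          abs_sub_comm √q]
        gcongr
        exact abs_sqrt_sub_sqrt_le hm hp hq
    _ = |a - b| / m + |b| * |p - q| / (2 * m ^ 3) := by
        field_simp

lemma abs_cosAngle_sub_cosAngle_le {N : ℕ} {A B : Matrix (Fin N) (Fin N) ℝ} {m M : ℝ}
    (hm : 0 < m) (hA : frob A ≤ M) (hB : frob B ≤ M)
    (hAm : ∀ v, vnorm v = 1 → m ≤ v ⬝ᵥ A *ᵥ v) (hBm : ∀ v, vnorm v = 1 → m ≤ v ⬝ᵥ B *ᵥ v)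
    {x y : Fin N → ℝ} (hx : vnorm x = 1) (hy : vnorm y = 1) :
    |cosAngle A x y - cosAngle B x y| ≤ (1 / m + M ^ 2 / m ^ 3) * frob (A - B) := by
  have entry_le {C : Matrix (Fin N) (Fin N) ℝ} {u v : Fin N → ℝ} (hu : vnorm u = 1)
      (hv : vnorm v = 1) : |u ⬝ᵥ C *ᵥ v| ≤ frob C := by
    simpa [hu, hv] using abs_dotProduct_mulVec_le u C v
  have entry_sub_le {u v : Fin N → ℝ} (hu : vnorm u = 1) (hv : vnorm v = 1) :
      |u ⬝ᵥ A *ᵥ v - u ⬝ᵥ B *ᵥ v| ≤ frob (A - B) := by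
    rw [← dotProduct_sub, ← sub_mulVec]
    exact entry_le hu hv
  have hM : 0 ≤ M := (frob_nonneg A).trans hA
  have hε : 0 ≤ frob (A - B) := frob_nonneg _
  have hxA := hAm x hx
  have hyA := hAm y hy
  have hxB := hBm x hx
  have hyB := hBm y hy
  have hprod : |(x ⬝ᵥ A *ᵥ x) * (y ⬝ᵥ A *ᵥ y) - (x ⬝ᵥ B *ᵥ x) * (y ⬝ᵥ B *ᵥ y)|
      ≤ 2 * M * frob (A - B) := by
    calc _ = |(x ⬝ᵥ A *ᵥ x) * ((y ⬝ᵥ A *ᵥ y) - (y ⬝ᵥ B *ᵥ y))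
            + ((x ⬝ᵥ A *ᵥ x) - (x ⬝ᵥ B *ᵥ x)) * (y ⬝ᵥ B *ᵥ y)| := by ring_nf
      _ ≤ M * frob (A - B) + frob (A - B) * M := by
        refine (abs_add_le _ _).trans ?_
        rw [abs_mul, abs_mul]
        gcongr
        exacts [(entry_le hx hx).trans hA, entry_sub_le hy hy, entry_sub_le hx hx,
          (entry_le hy hy).trans hB]
      _ = 2 * M * frob (A - B) := by ring
  have hsq {a b : ℝ} (ha : m ≤ a) (hb : m ≤ b) : m ^ 2 ≤ a * b := by
    rw [sq]
    exact mul_le_mul ha hb hm.le (hm.le.trans ha)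
  rw [cosAngle, cosAngle, ← Real.sqrt_mul (hm.le.trans hxA), ← Real.sqrt_mul (hm.le.trans hxB)]
  calc _ ≤ |x ⬝ᵥ A *ᵥ y - x ⬝ᵥ B *ᵥ y| / m + |x ⬝ᵥ B *ᵥ y|
          * |(x ⬝ᵥ A *ᵥ x) * (y ⬝ᵥ A *ᵥ y) - (x ⬝ᵥ B *ᵥ x) * (y ⬝ᵥ B *ᵥ y)| / (2 * m ^ 3) :=
        abs_div_sqrt_sub_div_sqrt_le hm (hsq hxA hyA) (hsq hxB hyB)
    _ ≤ frob (A - B) / m + M * (2 * M * frob (A - B)) / (2 * m ^ 3) := by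
        gcongr
        exacts [entry_sub_le hx hy, (entry_le hx hy).trans hB]
    _ = (1 / m + M ^ 2 / m ^ 3) * frob (A - B) := by
        field_simp

/-- **Stability of the cosine of a dihedral angle under metric perturbations.**
For symmetric positive definite `g₁, g₂` with matrix and inverse-matrix norms bounded
by `K`, and Euclidean unit vectors `n⁽¹⁾, n⁽²⁾`, one has
`|g₁(n_{g₁}⁽¹⁾, n_{g₁}⁽²⁾) − g₂(n_{g₂}⁽¹⁾, n_{g₂}⁽²⁾)| ≤ c |g₁ − g₂|`
with `c` depending only on `K` and `N`. -/
theorem dihedral_cosine_stability (N : ℕ) (K : ℝ) (hK : 0 < K) :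
    ∃ c : ℝ, 0 < c ∧
      ∀ (g₁ g₂ : Matrix (Fin N) (Fin N) ℝ) (n₁ n₂ : Fin N → ℝ),
        g₁.IsSymm → g₂.IsSymm → g₁.PosDef → g₂.PosDef →
        vnorm n₁ = 1 → vnorm n₂ = 1 →
        frob g₁ ≤ K → frob g₂ ≤ K → frob g₁⁻¹ ≤ K → frob g₂⁻¹ ≤ K →
        |bilin g₁ (gnormal g₁ n₁) (gnormal g₁ n₂)
          - bilin g₂ (gnormal g₂ n₁) (gnormal g₂ n₂)| ≤ c * frob (g₁ - g₂) := by
  refine ⟨K ^ 3 + K ^ 7, by positivity, ?_⟩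
  intro g₁ g₂ n₁ n₂ hs₁ hs₂ hg₁ hg₂ hn₁ hn₂ hf₁ hf₂ hfi₁ hfi₂
  have hd₁ : IsUnit g₁.det := (isUnit_iff_isUnit_det g₁).mp hg₁.isUnit
  have hd₂ : IsUnit g₂.det := (isUnit_iff_isUnit_det g₂).mp hg₂.isUnit
  rw [bilin_gnormal_gnormal hs₁ hd₁, bilin_gnormal_gnormal hs₂ hd₂]
  calc _ ≤ (1 / (1 / K) + K ^ 2 / (1 / K) ^ 3) * frob (g₁⁻¹ - g₂⁻¹) :=
        abs_cosAngle_sub_cosAngle_le (by positivity) hfi₁ hfi₂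
          (one_div_le_dotProduct_inv_mulVec hK hg₁ hf₁)
          (one_div_le_dotProduct_inv_mulVec hK hg₂ hf₂) hn₁ hn₂
    _ = (K + K ^ 5) * frob (g₁⁻¹ - g₂⁻¹) := by
        field_simp
    _ ≤ (K + K ^ 5) * (K * K * frob (g₁ - g₂)) := by
        gcongr
        exact (frob_inv_sub_inv_le hd₁ hd₂).trans
          (mul_le_mul_of_nonneg_right (mul_le_mul hfi₁ hfi₂ (frob_nonneg _) hK.le) (frob_nonneg _))
    _ = (K ^ 3 + K ^ 7) * frob (g₁ - g₂) := by ring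

end
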